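/- (Form-factor lower bound.) For every integer m ≥ 2 and every real g > 1, ∏_{p=0}^{m−1} ∏_{q=0}^{m−1} (ε_p + ε_{q+1/2})² ≥ ( ∏_{p=0}^{m−1} ∏_{p'=0}^{m−1} (ε_p + ε_{p'}) ) · ( ∏_{q=0}^{m−1} ∏_{q'=0}^{m−1} (ε_{q+1/2} + ε_{q'+1/2}) ). Equivalently, the form factor ξ with |ξ| = (1 − g^{−2})^{1/8} · [∏_{p}∏_{q}(ε_p + ε_{q+1/2})]^{1/4} / ( [∏_{p,p'}(ε_p + ε_{p'})]^{1/8} · [∏_{q,q'}(ε_{q+1/2} + ε_{q'+1/2})]^{1/8} ) satisfies |ξ| ≥ (1 − g^{−2})^{1/8}. -/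

import Mathlib

/-!
On positive reals the kernel `log (x + y)` is conditionally negative definite:
`∑ cᵢ cⱼ log (xᵢ + xⱼ) ≤ 0` whenever `∑ cᵢ = 0`. For the points `ε_p` with weight `1` and
`ε_{q+1/2}` with weight `-1` this is the logarithm of the product inequality, and the bound on
`|ξ|` is its eighth root. To see the definiteness, shift all points by `t ≥ 0`: the derivative
in `t` is the form of the Cauchy kernel `1 / (x + y) = ∫₀¹ u ^ (x + y - 1) du`, which is
positive semidefinite, while the shifted form tends to `0` as `t → ∞` because `∑ cᵢ = 0`.
-/

open scoped Real

/-- `ε_x = |g - e^{2πi x/m}|` for the transverse-field Ising chain of length `m`. -/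
noncomputable def eps (m : ℕ) (g x : ℝ) : ℝ :=
  ‖(g : ℂ) - Complex.exp (2 * Real.pi * Complex.I * (x : ℂ) / (m : ℂ))‖

/-- The ground state energy splitting
`δ(g, m) = (1/2) (Σ_{j<m} ε_{j+1/2} - Σ_{j<m} ε_j)` of the periodic one-dimensional
transverse-field Ising chain on `m` qubits. -/
noncomputable def tfimDelta (m : ℕ) (g : ℝ) : ℝ :=
  (1 / 2) * ((∑ j ∈ Finset.range m, eps m g ((j : ℝ) + 1 / 2))
    - ∑ j ∈ Finset.range m, eps m g (j : ℝ))

open Finset Filter Topology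

section LogKernel

variable {ι : Type*} (s : Finset ι) (c : ι → ℝ)

theorem sum_sum_mul_inv_add_nonneg {y : ι → ℝ} (hy : ∀ i ∈ s, 0 < y i) :
    0 ≤ ∑ i ∈ s, ∑ j ∈ s, c i * c j * (y i + y j)⁻¹ := by
  set f : ι × ι → ℝ → ℝ := fun p u => c p.1 * c p.2 * u ^ (y p.1 + y p.2 - 1)
  have hexp : ∀ p ∈ s ×ˢ s, -1 < y p.1 + y p.2 - 1 := fun p hp => by
    linarith [hy _ (mem_product.1 hp).1, hy _ (mem_product.1 hp).2]
  have hint : ∫ u in (0 : ℝ)..1, ∑ p ∈ s ×ˢ s, f p u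
      = ∑ i ∈ s, ∑ j ∈ s, c i * c j * (y i + y j)⁻¹ := by
    rw [intervalIntegral.integral_finsetSum
      fun p hp => (intervalIntegral.intervalIntegrable_rpow' (hexp p hp)).const_mul _, sum_product]
    refine sum_congr rfl fun i hi => sum_congr rfl fun j hj => ?_
    rw [intervalIntegral.integral_const_mul,
      integral_rpow (.inl (hexp (i, j) (mem_product.2 ⟨hi, hj⟩))), sub_add_cancel,
      Real.one_rpow, Real.zero_rpow (by linarith [hy i hi, hy j hj]), sub_zero, one_div]
  rw [← hint, intervalIntegral.integral_of_le zero_le_one]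
  refine MeasureTheory.setIntegral_nonneg measurableSet_Ioc fun u hu => ?_
  have hsq : ∑ p ∈ s ×ˢ s, f p u = (∑ i ∈ s, c i * u ^ (y i - 1 / 2)) ^ 2 := by
    rw [sq, sum_mul_sum, sum_product]
    refine sum_congr rfl fun i _ => sum_congr rfl fun j _ => ?_
    simp only [f]
    rw [mul_mul_mul_comm, ← Real.rpow_add hu.1]
    ring_nf
  exact hsq ▸ sq_nonneg _

theorem sum_sum_mul_log_add_nonpos {x : ι → ℝ} (hx : ∀ i ∈ s, 0 < x i)
    (hc : ∑ i ∈ s, c i = 0) :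
    ∑ i ∈ s, ∑ j ∈ s, c i * c j * Real.log (x i + x j) ≤ 0 := by
  set G : ℝ → ℝ := fun t => ∑ i ∈ s, ∑ j ∈ s, c i * c j * Real.log (t + (x i + x j))
  have hG' : ∀ t ≥ 0, HasDerivAt G (∑ i ∈ s, ∑ j ∈ s, c i * c j * (t + (x i + x j))⁻¹) t :=
    fun t ht => HasDerivAt.fun_sum fun i hi => HasDerivAt.fun_sum fun j hj => by
      simpa using (((hasDerivAt_id' t).add_const (x i + x j)).log
        (by linarith [hx i hi, hx j hj])).const_mul (c i * c j)
  have hmono : MonotoneOn G (Set.Ici 0) := by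
    refine monotoneOn_of_hasDerivWithinAt_nonneg (convex_Ici 0)
      (fun t ht => (hG' t ht).continuousAt.continuousWithinAt)
      (fun t ht => (hG' t (interior_subset ht)).hasDerivWithinAt) fun t ht => ?_
    have ht : 0 ≤ t := interior_subset ht
    convert sum_sum_mul_inv_add_nonneg s c (y := fun i => x i + t / 2)
      fun i hi => by linarith [hx i hi] using 4
    ring
  have hlim : Tendsto G atTop (𝓝 0) := by
    have hlog_t : ∀ t, ∑ i ∈ s, ∑ j ∈ s, c i * c j * Real.log t = 0 := fun t => by
      simp only [← sum_mul, ← mul_sum, hc, zero_mul, mul_zero, sum_const_zero]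
    simpa only [mul_zero, sum_const_zero, mul_sub, sum_sub_distrib, hlog_t, sub_zero] using
      tendsto_finsetSum s fun i _ => tendsto_finsetSum s fun j _ =>
        (Real.tendsto_log_comp_add_sub_log (x i + x j)).const_mul (c i * c j)
  exact ge_of_tendsto hlim (eventually_ge_atTop 0 |>.mono fun t ht =>
    by simpa [G] using hmono Set.self_mem_Ici ht ht)

theorem log_prod_prod_of_pos {f : ι → ι → ℝ} (hf : ∀ i ∈ s, ∀ j ∈ s, 0 < f i j) :
    Real.log (∏ i ∈ s, ∏ j ∈ s, f i j) = ∑ i ∈ s, ∑ j ∈ s, Real.log (f i j) := by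
  rw [Real.log_prod fun i hi => (prod_pos fun j hj => hf i hi j hj).ne']
  exact sum_congr rfl fun i hi => Real.log_prod fun j hj => (hf i hi j hj).ne'

theorem prod_prod_add_mul_prod_prod_add_le_sq {a b : ι → ℝ} (ha : ∀ i ∈ s, 0 < a i)
    (hb : ∀ j ∈ s, 0 < b j) :
    (∏ i ∈ s, ∏ i' ∈ s, (a i + a i')) * ∏ j ∈ s, ∏ j' ∈ s, (b j + b j') ≤
      (∏ i ∈ s, ∏ j ∈ s, (a i + b j)) ^ 2 := by
  have hlog := sum_sum_mul_log_add_nonpos (s.disjSum s) (Sum.elim (fun _ => 1) fun _ => -1)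
    (x := Sum.elim a b) (by simpa using ⟨ha, hb⟩) (by simp)
  simp only [sum_disjSum, Sum.elim_inl, Sum.elim_inr, one_mul, neg_one_mul, mul_neg, neg_neg,
    sum_neg_distrib, sum_add_distrib, add_comm (b _) (a _)] at hlog
  rw [sum_comm (f := fun j i => Real.log (a i + b j))] at hlog
  have hpos : ∀ {x y : ι → ℝ}, (∀ i ∈ s, 0 < x i) → (∀ j ∈ s, 0 < y j) →
      ∀ i ∈ s, ∀ j ∈ s, 0 < x i + y j :=
    fun hx hy i hi j hj => add_pos (hx i hi) (hy j hj)
  have hprod : ∀ {x y : ι → ℝ}, (∀ i ∈ s, 0 < x i) → (∀ j ∈ s, 0 < y j) →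
      0 < ∏ i ∈ s, ∏ j ∈ s, (x i + y j) :=
    fun hx hy => prod_pos fun i hi => prod_pos fun j hj => hpos hx hy i hi j hj
  rw [← Real.log_le_log_iff (mul_pos (hprod ha ha) (hprod hb hb)) (pow_pos (hprod ha hb) 2),
    Real.log_mul (hprod ha ha).ne' (hprod hb hb).ne', Real.log_pow,
    log_prod_prod_of_pos s (hpos ha ha), log_prod_prod_of_pos s (hpos hb hb),
    log_prod_prod_of_pos s (hpos ha hb)]
  push_cast
  linarith

end LogKernel

theorem eps_pos {m : ℕ} {g : ℝ} (hg : 1 < g) (x : ℝ) : 0 < eps m g x := by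
  have hexp : ‖Complex.exp (2 * π * Complex.I * x / m)‖ = 1 := by
    rw [Complex.norm_exp]; simp
  have := norm_sub_norm_le (g : ℂ) (Complex.exp (2 * π * Complex.I * x / m))
  rw [hexp, Complex.norm_real, Real.norm_of_nonneg (by linarith)] at this
  exact lt_of_lt_of_le (by linarith) this

theorem le_mul_rpow_div_rpow_mul_rpow {K P Q R : ℝ} (hK : 0 ≤ K) (hP : 0 ≤ P) (hQ : 0 < Q)
    (hR : 0 < R) (h : Q * R ≤ P ^ 2) :
    K ≤ K * P ^ (1 / 4 : ℝ) / (Q ^ (1 / 8 : ℝ) * R ^ (1 / 8 : ℝ)) := by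
  have hQR : Q ^ (1 / 8 : ℝ) * R ^ (1 / 8 : ℝ) ≤ P ^ (1 / 4 : ℝ) := calc
    _ = (Q * R) ^ (1 / 8 : ℝ) := (Real.mul_rpow hQ.le hR.le).symm
    _ ≤ (P ^ 2) ^ (1 / 8 : ℝ) := Real.rpow_le_rpow (by positivity) h (by norm_num)
    _ = P ^ (1 / 4 : ℝ) := by rw [← Real.rpow_natCast, ← Real.rpow_mul hP]; norm_num
  rw [le_div_iff₀ (by positivity)]
  exact mul_le_mul_of_nonneg_left hQR hK

theorem form_factor_lower_bound_general (m : ℕ) (g : ℝ) (hg : 1 < g) :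
    (∏ p ∈ Finset.range m, ∏ q ∈ Finset.range m,
        (eps m g (p : ℝ) + eps m g ((q : ℝ) + 1 / 2)) ^ 2 ≥
      (∏ p ∈ Finset.range m, ∏ p' ∈ Finset.range m,
        (eps m g (p : ℝ) + eps m g (p' : ℝ))) *
      ∏ q ∈ Finset.range m, ∏ q' ∈ Finset.range m,
        (eps m g ((q : ℝ) + 1 / 2) + eps m g ((q' : ℝ) + 1 / 2))) ∧
    (1 - (g ^ 2)⁻¹) ^ ((1 : ℝ) / 8) *
        (∏ p ∈ Finset.range m, ∏ q ∈ Finset.range m,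
          (eps m g (p : ℝ) + eps m g ((q : ℝ) + 1 / 2))) ^ ((1 : ℝ) / 4) /
        ((∏ p ∈ Finset.range m, ∏ p' ∈ Finset.range m,
            (eps m g (p : ℝ) + eps m g (p' : ℝ))) ^ ((1 : ℝ) / 8) *
          (∏ q ∈ Finset.range m, ∏ q' ∈ Finset.range m,
            (eps m g ((q : ℝ) + 1 / 2) + eps m g ((q' : ℝ) + 1 / 2))) ^ ((1 : ℝ) / 8)) ≥
      (1 - (g ^ 2)⁻¹) ^ ((1 : ℝ) / 8) := by
  have hε := eps_pos (m := m) hg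
  have key := prod_prod_add_mul_prod_prod_add_le_sq (range m)
    (a := fun p : ℕ => eps m g p) (b := fun q : ℕ => eps m g (q + 1 / 2))
    (fun _ _ => hε _) (fun _ _ => hε _)
  have hprod : ∀ x y : ℕ → ℝ, 0 < ∏ i ∈ range m, ∏ j ∈ range m, (eps m g (x i) + eps m g (y j)) :=
    fun x y => prod_pos fun _ _ => prod_pos fun _ _ => add_pos (hε _) (hε _)
  refine ⟨by simpa only [prod_pow] using key, le_mul_rpow_div_rpow_mul_rpow ?_ ?_ ?_ ?_ key⟩
  · have : (g ^ 2)⁻¹ ≤ 1 := inv_le_one_of_one_le₀ (one_le_pow₀ hg.le)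
    exact Real.rpow_nonneg (by linarith) _
  exacts [(hprod _ _).le, hprod _ _, hprod _ _]

/-- **Form-factor lower bound** (Eq. (xi_bound)): for `m ≥ 2` and `g > 1`,
`∏_{p,q} (ε_p + ε_{q+1/2})² ≥ (∏_{p,p'} (ε_p + ε_{p'})) (∏_{q,q'} (ε_{q+1/2} + ε_{q'+1/2}))`;
equivalently, the form factor `|ξ|` of Eq. (xi) satisfies `|ξ| ≥ (1 - g^{-2})^{1/8}`. -/
theorem form_factor_lower_bound (m : ℕ) (hm : 2 ≤ m) (g : ℝ) (hg : 1 < g) :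
    (∏ p ∈ Finset.range m, ∏ q ∈ Finset.range m,
        (eps m g (p : ℝ) + eps m g ((q : ℝ) + 1 / 2)) ^ 2 ≥
      (∏ p ∈ Finset.range m, ∏ p' ∈ Finset.range m,
        (eps m g (p : ℝ) + eps m g (p' : ℝ))) *
      ∏ q ∈ Finset.range m, ∏ q' ∈ Finset.range m,
        (eps m g ((q : ℝ) + 1 / 2) + eps m g ((q' : ℝ) + 1 / 2))) ∧
    (1 - (g ^ 2)⁻¹) ^ ((1 : ℝ) / 8) *
        (∏ p ∈ Finset.range m, ∏ q ∈ Finset.range m,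
          (eps m g (p : ℝ) + eps m g ((q : ℝ) + 1 / 2))) ^ ((1 : ℝ) / 4) /
        ((∏ p ∈ Finset.range m, ∏ p' ∈ Finset.range m,
            (eps m g (p : ℝ) + eps m g (p' : ℝ))) ^ ((1 : ℝ) / 8) *
          (∏ q ∈ Finset.range m, ∏ q' ∈ Finset.range m,
            (eps m g ((q : ℝ) + 1 / 2) + eps m g ((q' : ℝ) + 1 / 2))) ^ ((1 : ℝ) / 8)) ≥
      (1 - (g ^ 2)⁻¹) ^ ((1 : ℝ) / 8) :=
  form_factor_lower_bound_general m g hg
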